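/- Assume Hypothesis (HA) and let k ≥ 1 be a natural number such that σ_per(P) = {λ e^{2πi j/k} : j = 0, 1, …, k−1}. Then for every α ∈ ℂ with |α| = 1: ker(P^{k+1} − λ^{k+1} α) ≠ {0} in L^∞(M,μ;ℂ) if and only if ker(P − λ α) ≠ {0}. Consequently the unimodular point spectra of λ^{-1}P and λ^{-(k+1)}P^{k+1} coincide (both equal the set of k-th roots of unity). -/

import Mathlib

open MeasureTheory ProbabilityTheory Filter Topology

namespace QEM

noncomputable section

variable {M : Type*} [MetricSpace M] [CompactSpace M] [MeasurableSpace M] [BorelSpace M]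

/-- The weighted Koopman operator on real-valued functions:
`P f (x) = e^{φ(x)} ∫ f(y) κ(x,dy)`. -/
def PR (φ : M → ℝ) (κ : Kernel M M) (f : M → ℝ) : M → ℝ :=
  fun x => Real.exp (φ x) * ∫ y, f y ∂(κ x)

/-- The weighted Koopman operator on complex-valued functions
(`P f := P(Re f) + i P(Im f)`, equivalently with the complex Bochner integral). -/
def PC (φ : M → ℝ) (κ : Kernel M M) (f : M → ℂ) : M → ℂ :=
  fun x => (Real.exp (φ x) : ℂ) * ∫ y, f y ∂(κ x)

/-- Bounded measurable real-valued functions. -/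
def BddMeas (f : M → ℝ) : Prop := Measurable f ∧ ∃ C : ℝ, ∀ x, |f x| ≤ C

/-- Bounded measurable complex-valued functions. -/
def BddMeasC (f : M → ℂ) : Prop := Measurable f ∧ ∃ C : ℝ, ∀ x, ‖f x‖ ≤ C

/-- The operator `P_g f := P (1_{g>0} · f)`. -/
def Pg (φ : M → ℝ) (κ : Kernel M M) (g : M → ℝ) : (M → ℝ) → (M → ℝ) :=
  fun f => PR φ κ (Set.indicator {x | 0 < g x} f)

/-- Complex version of `P_g`. -/
def PgC (φ : M → ℝ) (κ : Kernel M M) (g : M → ℝ) : (M → ℂ) → (M → ℂ) :=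
  fun f => PC φ κ (Set.indicator {x | 0 < g x} f)

/-- The indicator function of `{g > 0}`. -/
def oneG (g : M → ℝ) : M → ℝ := Set.indicator {x | 0 < g x} (fun _ => (1 : ℝ))

/-- The normalized restriction `μ̃` of `μ` to `{g > 0}`, i.e.
`μ̃(A) = μ(A ∩ {g>0}) / μ({g>0})`. -/
def mtilde (μ : Measure M) (g : M → ℝ) : Measure M :=
  (μ {x | 0 < g x})⁻¹ • μ.restrict {x | 0 < g x}

/-- The root-of-unity phase `e^{2πi j/k}`. -/
def rootU (k j : ℕ) : ℂ := Complex.exp (2 * (Real.pi : ℂ) * Complex.I * (j : ℂ) / (k : ℂ))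

/-- Basic standing setup: `μ` is a fully supported Borel probability measure, `κ` a
sub-Markov kernel with `κ(x,·) ≪ μ` for all `x`, and `φ` a (bounded) continuous function. -/
structure Setup (μ : Measure M) (κ : Kernel M M) (φ : M → ℝ) : Prop where
  prob : IsProbabilityMeasure μ
  fullSupp : ∀ U : Set M, IsOpen U → U.Nonempty → 0 < μ U
  subMarkov : ∀ x, κ x Set.univ ≤ 1
  ac : ∀ x, κ x ≪ μ
  contφ : Continuous φ

/-- Hypothesis (HA): (i) `P` is strong Feller; (ii) `lam > 0` equals the spectral radius of the
induced operator `T` on `L^∞(M,μ;ℂ)` (where `T` agrees a.e. with the pointwise operator `P` on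
bounded measurable representatives); (iii) the eigenspace of `P` at `lam` in `L^∞(M,μ)` is
one-dimensional, spanned by a continuous nonnegative `g ≢ 0` with `P g = lam·g` and
`∫ g dμ = μ {g>0}`; (iv) `P^*μ = lam·μ`. -/
structure HypHA (μ : Measure M) (κ : Kernel M M) (φ : M → ℝ)
    (T : Lp ℂ ⊤ μ →L[ℂ] Lp ℂ ⊤ μ) (lam : ℝ) (g : M → ℝ) : Prop where
  setup : Setup μ κ φ
  strongFeller : ∀ f : M → ℝ, BddMeas f → Continuous (PR φ κ f)
  lam_pos : 0 < lam
  Tcompat : ∀ f : M → ℂ, BddMeasC f → ∀ F : Lp ℂ ⊤ μ, ⇑F =ᵐ[μ] f →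
      ⇑(T F) =ᵐ[μ] PC φ κ f
  specRad : spectralRadius ℂ T = ENNReal.ofReal lam
  g_cont : Continuous g
  g_nonneg : ∀ x, 0 ≤ g x
  g_ne : g ≠ 0
  g_eigen : PR φ κ g = fun x => lam * g x
  g_int : ∫ x, g x ∂μ = (μ {x | 0 < g x}).toReal
  eigen_dim : ∀ f : M → ℝ, BddMeas f → PR φ κ f =ᵐ[μ] (fun x => lam * f x) →
      ∃ c : ℝ, f =ᵐ[μ] fun x => c * g x
  Pstar : ∀ f : M → ℝ, BddMeas f → ∫ x, PR φ κ f x ∂μ = lam * ∫ x, f x ∂μ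

/-- Membership in the point peripheral spectrum `σ_per(P)`:
`|α| = lam` and `P f = α f` for some nonzero `f ∈ L^∞(M,μ;ℂ)`. -/
def PerSpec (μ : Measure M) (κ : Kernel M M) (φ : M → ℝ) (lam : ℝ) (α : ℂ) : Prop :=
  ‖α‖ = lam ∧ ∃ f : M → ℂ, BddMeasC f ∧ ¬ (f =ᵐ[μ] 0) ∧ PC φ κ f =ᵐ[μ] fun x => α * f x

/-- `σ_per(P) = {lam·e^{2πi j/k} : j = 0, …, k-1}`. -/
def PerSpecEq (μ : Measure M) (κ : Kernel M M) (φ : M → ℝ) (lam : ℝ) (k : ℕ) : Prop :=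
  ∀ α : ℂ, PerSpec μ κ φ lam α ↔ ∃ j : ℕ, j < k ∧ α = (lam : ℂ) * rootU k j

/-- A family of `k` linearly independent, nonnegative, continuous functions with pairwise
disjoint supports, spanning `ker(P^k - lam^k)` in `L^∞(M,μ;ℂ)`, each of integral `μ {g>0}`. -/
structure PreFamily (μ : Measure M) (κ : Kernel M M) (φ : M → ℝ) (lam : ℝ) (g : M → ℝ)
    (k : ℕ) (gi : Fin k → M → ℝ) : Prop where
  cont : ∀ i, Continuous (gi i)
  nonneg : ∀ i x, 0 ≤ gi i x
  indep : LinearIndependent ℝ gi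
  span_ker : ∀ f : M → ℂ, BddMeasC f →
      (((PC φ κ)^[k] f) =ᵐ[μ] fun x => (lam : ℂ) ^ k * f x) ↔
        ∃ c : Fin k → ℂ, f =ᵐ[μ] fun x => ∑ i, c i * (gi i x : ℂ)
  integral : ∀ i, ∫ x, gi i x ∂μ = (μ {x | 0 < g x}).toReal
  disj : ∀ i j, i ≠ j → ∀ x, ¬ (0 < gi i x ∧ 0 < gi j x)

/-- The cyclic family hypothesis: nonnegative continuous `g_0, …, g_{k-1}` supported in `{g>0}`
with pairwise disjoint supports, spanning `ker(P^k - lam^k)` in `L^∞(M,μ;ℂ)`, with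
`∫ g_i dμ = μ {g>0}`, `P g_i = lam·g_{i-1 (mod k)}` and `g = (1/k) ∑ g_i`. -/
structure CyclicFamily (μ : Measure M) (κ : Kernel M M) (φ : M → ℝ) (lam : ℝ) (g : M → ℝ)
    (k : ℕ) [NeZero k] (gi : Fin k → M → ℝ) : Prop where
  cont : ∀ i, Continuous (gi i)
  nonneg : ∀ i x, 0 ≤ gi i x
  supported : ∀ i x, 0 < gi i x → 0 < g x
  disj : ∀ i j, i ≠ j → ∀ x, ¬ (0 < gi i x ∧ 0 < gi j x)
  span_ker : ∀ f : M → ℂ, BddMeasC f →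
      (((PC φ κ)^[k] f) =ᵐ[μ] fun x => (lam : ℂ) ^ k * f x) ↔
        ∃ c : Fin k → ℂ, f =ᵐ[μ] fun x => ∑ i, c i * (gi i x : ℂ)
  integral : ∀ i, ∫ x, gi i x ∂μ = (μ {x | 0 < g x}).toReal
  cycle : ∀ i : Fin k, PR φ κ (gi i) = fun x => lam * gi (i - 1) x
  avg : g = fun x => (1 / (k : ℝ)) * ∑ i, gi i x

/-- The spectral decomposition hypothesis: a closed `P_g`-invariant subspace `V` of
`L^∞({g>0},μ;ℂ)` with `L^∞({g>0},μ;ℂ) = span{g_0,…,g_{k-1}} ⊕ V` and such that the spectral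
radius of `P_g` restricted to `V` is `< lam` (expressed through a geometric bound on the
iterates, via Gelfand's formula). -/
structure SpecDecomp (μ : Measure M) (κ : Kernel M M) (φ : M → ℝ) (lam : ℝ) (g : M → ℝ)
    (k : ℕ) (gi : Fin k → M → ℝ) (V : Submodule ℂ (M → ℂ)) : Prop where
  meas : ∀ v ∈ V, Measurable v
  bdd : ∀ v ∈ V, ∃ C : ℝ, ∀ x, ‖v x‖ ≤ C
  supp : ∀ v ∈ V, ∀ x, ¬ 0 < g x → v x = 0
  invariant : ∀ v ∈ V, PgC φ κ g v ∈ V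
  closed : ∀ (u : ℕ → M → ℂ) (f : M → ℂ), (∀ n, u n ∈ V) → Measurable f →
      (∃ C : ℝ, ∀ x, ‖f x‖ ≤ C) → (∀ x, ¬ 0 < g x → f x = 0) →
      Tendsto (fun n => eLpNorm (u n - f) ⊤ μ) atTop (nhds 0) → f ∈ V
  decomp : ∀ f : M → ℂ, BddMeasC f → (∀ x, ¬ 0 < g x → f x = 0) →
      ∃ c : Fin k → ℂ, ∃ v ∈ V, f = fun x => (∑ i, c i * (gi i x : ℂ)) + v x
  unique : ∀ c : Fin k → ℂ, (fun x => ∑ i, c i * (gi i x : ℂ)) ∈ V → c = 0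
  gap : ∃ r : ℝ, 0 ≤ r ∧ r < lam ∧ ∃ C : ℝ, ∀ n : ℕ, ∀ v ∈ V,
      eLpNorm ((PgC φ κ g)^[n] v) ⊤ μ ≤ ENNReal.ofReal (C * r ^ n) * eLpNorm v ⊤ μ

/-- The operator `P^{k+1} - lam^{k+1}` on complex-valued functions. -/
def Qop (φ : M → ℝ) (κ : Kernel M M) (lam : ℝ) (k : ℕ) : (M → ℂ) → (M → ℂ) :=
  fun h x => (PC φ κ)^[k + 1] h x - (lam : ℂ) ^ (k + 1) * h x

/-! If `P^n f = c f` with `f ≠ 0`, pick `b` with `b^n = c⁻¹` and a primitive `n`-th root of unity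
`ξ`. The geometric sums `F_j = ∑_{m<n} (b ξ^j)^m P^m f` satisfy `b ξ^j P F_j = F_j`, and
`∑_j F_j = n f`, so some `F_j` is a nonzero eigenfunction of `P` whose eigenvalue `(b ξ^j)⁻¹` is
an `n`-th root of `c`. For `n = k + 1` and `c = λ^{k+1} α`, the peripheral spectrum forces that
eigenvalue to be `λ ω` with `ω^k = 1`; then `α = ω^{k+1} = ω`. -/

section Algebra

variable {R : Type*} [CommRing R]

lemma mul_sum_range_pow_mul_succ {a : R} {u : ℕ → R} {n : ℕ} (h : a ^ n * u n = u 0) :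
    a * ∑ m ∈ Finset.range n, a ^ m * u (m + 1) = ∑ m ∈ Finset.range n, a ^ m * u m := by
  have hshift := Finset.sum_range_succ' (fun m => a ^ m * u m) n
  have hlast := Finset.sum_range_succ (fun m => a ^ m * u m) n
  simp only [pow_succ, pow_zero, one_mul] at hshift
  rw [Finset.mul_sum]
  simp only [mul_left_comm a, ← mul_assoc]
  linear_combination hlast - hshift + h

lemma _root_.IsPrimitiveRoot.sum_range_pow_pow [IsDomain R] {ξ : R} {n m : ℕ}
    (hξ : IsPrimitiveRoot ξ n) (hm : m < n) :
    ∑ j ∈ Finset.range n, (ξ ^ m) ^ j = if m = 0 then (n : R) else 0 := by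
  split_ifs with hm0
  · simp [hm0]
  · have hne : ξ ^ m - 1 ≠ 0 := sub_ne_zero.2 (hξ.pow_ne_one_of_pos_of_lt hm0 hm)
    refine (mul_eq_zero.1 ?_).resolve_right hne
    rw [geom_sum_mul, ← pow_mul, mul_comm, pow_mul, hξ.pow_eq_one, one_pow, sub_self]

lemma _root_.IsPrimitiveRoot.sum_range_sum_range_mul_pow [IsDomain R] {ξ : R} {n : ℕ}
    (hξ : IsPrimitiveRoot ξ n) (hn : n ≠ 0) (b : R) (u : ℕ → R) :
    ∑ j ∈ Finset.range n, ∑ m ∈ Finset.range n, (b * ξ ^ j) ^ m * u m = n * u 0 := by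
  calc ∑ j ∈ Finset.range n, ∑ m ∈ Finset.range n, (b * ξ ^ j) ^ m * u m
      = ∑ m ∈ Finset.range n, b ^ m * u m * ∑ j ∈ Finset.range n, (ξ ^ m) ^ j := by
        rw [Finset.sum_comm]
        refine Finset.sum_congr rfl fun m _ => ?_
        rw [Finset.mul_sum]
        refine Finset.sum_congr rfl fun j _ => ?_
        rw [mul_pow, ← pow_mul, ← pow_mul, mul_comm j m]
        ring
    _ = ∑ m ∈ Finset.range n, if m = 0 then b ^ m * u m * n else 0 := by
        refine Finset.sum_congr rfl fun m hm => ?_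
        rw [hξ.sum_range_pow_pow (Finset.mem_range.1 hm)]
        split_ifs <;> simp
    _ = n * u 0 := by
        rw [Finset.sum_ite_eq' _ _ (fun m => b ^ m * u m * n),
          if_pos (Finset.mem_range.2 (Nat.pos_of_ne_zero hn))]
        ring

lemma norm_eq_of_pow_eq_pow_mul {γ α : ℂ} {r : ℝ} (hr : 0 ≤ r) {n : ℕ} (hn : n ≠ 0)
    (hα : ‖α‖ = 1) (h : γ ^ n = r ^ n * α) : ‖γ‖ = r := by
  have hpow := congrArg norm h
  rw [norm_pow, norm_mul, norm_pow, hα, mul_one, Complex.norm_real, Real.norm_of_nonneg hr] at hpow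
  exact (pow_left_inj₀ (norm_nonneg _) hr hn).1 hpow

end Algebra

lemma rootU_pow_self {k : ℕ} (hk : k ≠ 0) (j : ℕ) : rootU k j ^ k = 1 := by
  have hkc : (k : ℂ) ≠ 0 := Nat.cast_ne_zero.2 hk
  have hexp : (k : ℂ) * (2 * (Real.pi : ℂ) * Complex.I * (j : ℂ) / (k : ℂ))
      = ((j : ℤ) : ℂ) * (2 * (Real.pi : ℂ) * Complex.I) := by
    push_cast
    field_simp
  rw [rootU, ← Complex.exp_nat_mul, hexp, Complex.exp_int_mul_two_pi_mul_I]

section Koopman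

variable {X : Type*} [MeasurableSpace X] {φ : X → ℝ} {κ : Kernel X X}

lemma isFiniteKernel_of_le_one (h : ∀ x, κ x Set.univ ≤ 1) : IsFiniteKernel κ :=
  ⟨⟨1, ENNReal.one_lt_top, h⟩⟩

lemma BddMeasC.integrable {f : X → ℂ} (hf : BddMeasC f) (ν : Measure X) [IsFiniteMeasure ν] :
    Integrable f ν :=
  let ⟨hm, _, hC⟩ := hf
  ⟨hm.aestronglyMeasurable, HasFiniteIntegral.of_bounded (ae_of_all _ hC)⟩

lemma BddMeasC.const_mul {f : X → ℂ} (hf : BddMeasC f) (c : ℂ) :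
    BddMeasC (fun x => c * f x) :=
  let ⟨hm, C, hC⟩ := hf
  ⟨hm.const_mul c, ‖c‖ * C, fun x => by
    rw [norm_mul]; exact mul_le_mul_of_nonneg_left (hC x) (norm_nonneg c)⟩

lemma BddMeasC.add {f h : X → ℂ} (hf : BddMeasC f) (hh : BddMeasC h) :
    BddMeasC (fun x => f x + h x) :=
  let ⟨hm, C, hC⟩ := hf
  let ⟨hm', D, hD⟩ := hh
  ⟨hm.add hm', C + D, fun x => (norm_add_le _ _).trans (add_le_add (hC x) (hD x))⟩

lemma BddMeasC.finset_sum {ι : Type*} (s : Finset ι) {F : ι → X → ℂ}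
    (hF : ∀ i ∈ s, BddMeasC (F i)) : BddMeasC (fun x => ∑ i ∈ s, F i x) := by
  classical
  induction s using Finset.induction_on with
  | empty => exact ⟨measurable_const, 0, by simp⟩
  | insert i s hi ih =>
    simp only [Finset.sum_insert hi]
    exact (hF i (Finset.mem_insert_self i s)).add
      (ih fun j hj => hF j (Finset.mem_insert_of_mem hj))

lemma measurable_PC (hφ : Measurable φ) {f : X → ℂ} (hf : Measurable f) :
    Measurable (PC φ κ f) :=
  (Complex.measurable_ofReal.comp (Real.measurable_exp.comp hφ)).mul
    hf.stronglyMeasurable.integral_kernel.measurable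

lemma BddMeasC.PC [IsFiniteKernel κ] (hφ : Measurable φ) (hφb : BddAbove (Set.range φ))
    {f : X → ℂ} (hf : BddMeasC f) : BddMeasC (PC φ κ f) := by
  obtain ⟨hm, C, hC⟩ := hf
  obtain ⟨B, hB⟩ := hφb
  refine ⟨measurable_PC hφ hm, Real.exp B * (C * κ.bound.toReal), fun x => ?_⟩
  have hC0 : 0 ≤ C := (norm_nonneg _).trans (hC x)
  have hint : ‖∫ y, f y ∂(κ x)‖ ≤ C * κ.bound.toReal :=
    (norm_integral_le_of_norm_le_const (ae_of_all _ hC)).trans <|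
      mul_le_mul_of_nonneg_left
        (ENNReal.toReal_mono κ.bound_ne_top (κ.measure_le_bound x Set.univ)) hC0
  calc ‖QEM.PC φ κ f x‖ = Real.exp (φ x) * ‖∫ y, f y ∂(κ x)‖ := by
        rw [QEM.PC, norm_mul, Complex.norm_real, Real.norm_of_nonneg (Real.exp_pos _).le]
    _ ≤ Real.exp B * (C * κ.bound.toReal) :=
        mul_le_mul (Real.exp_le_exp.2 (hB ⟨x, rfl⟩)) hint (norm_nonneg _) (Real.exp_pos _).le

lemma BddMeasC.iterate_PC [IsFiniteKernel κ] (hφ : Measurable φ) (hφb : BddAbove (Set.range φ))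
    {f : X → ℂ} (hf : BddMeasC f) (m : ℕ) : BddMeasC ((QEM.PC φ κ)^[m] f) := by
  induction m with
  | zero => exact hf
  | succ m ih =>
    rw [Function.iterate_succ_apply']
    exact ih.PC hφ hφb

lemma PC_congr_ae {μ : Measure X} (hac : ∀ x, κ x ≪ μ) {f f' : X → ℂ} (h : f =ᵐ[μ] f') :
    PC φ κ f = PC φ κ f' := by
  funext x
  rw [PC, PC, integral_congr_ae (Measure.ae_le_iff_absolutelyContinuous.2 (hac x) h)]

lemma PC_const_mul (c : ℂ) (f : X → ℂ) :
    PC φ κ (fun x => c * f x) = fun x => c * PC φ κ f x := by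
  funext x
  rw [PC, PC, integral_const_mul]
  ring

lemma PC_finset_sum [IsFiniteKernel κ] {ι : Type*} (s : Finset ι) {F : ι → X → ℂ}
    (hF : ∀ i ∈ s, BddMeasC (F i)) :
    PC φ κ (fun x => ∑ i ∈ s, F i x) = fun x => ∑ i ∈ s, PC φ κ (F i) x := by
  funext x
  rw [PC, integral_finsetSum s fun i hi => (hF i hi).integrable (κ x), Finset.mul_sum]
  rfl

lemma PC_iterate_ae_eq_pow_mul {μ : Measure X} (hac : ∀ x, κ x ≪ μ) {f : X → ℂ} {γ : ℂ}
    (h : PC φ κ f =ᵐ[μ] fun x => γ * f x) (m : ℕ) :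
    (PC φ κ)^[m] f =ᵐ[μ] fun x => γ ^ m * f x := by
  induction m with
  | zero => simp
  | succ m ih =>
    rw [Function.iterate_succ_apply', PC_congr_ae hac ih, PC_const_mul]
    filter_upwards [h] with x hx
    rw [hx, pow_succ]
    ring

def PCgeomSum (φ : X → ℝ) (κ : Kernel X X) (n : ℕ) (a : ℂ) (f : X → ℂ) : X → ℂ :=
  fun x => ∑ m ∈ Finset.range n, a ^ m * (PC φ κ)^[m] f x

lemma sum_range_PCgeomSum {ξ : ℂ} {n : ℕ} (hξ : IsPrimitiveRoot ξ n)
    (hn : n ≠ 0) (b : ℂ) (f : X → ℂ) (x : X) :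
    ∑ j ∈ Finset.range n, PCgeomSum φ κ n (b * ξ ^ j) f x = n * f x :=
  hξ.sum_range_sum_range_mul_pow hn b (fun m => (PC φ κ)^[m] f x)

lemma PerSpecEq.eq_mul_of_perSpec {μ : Measure X} {lam : ℝ} {k : ℕ}
    (hk : PerSpecEq μ κ φ lam k) {γ : ℂ} (hγ : PerSpec μ κ φ lam γ) :
    ∃ ω : ℂ, ω ^ k = 1 ∧ γ = lam * ω := by
  obtain ⟨j, hj, rfl⟩ := (hk γ).1 hγ
  exact ⟨rootU k j, rootU_pow_self (Nat.ne_zero_of_lt hj) j, rfl⟩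

variable [IsFiniteKernel κ]

lemma BddMeasC.PCgeomSum (hφ : Measurable φ) (hφb : BddAbove (Set.range φ)) {f : X → ℂ}
    (hf : BddMeasC f) (n : ℕ) (a : ℂ) :
    BddMeasC (PCgeomSum φ κ n a f) :=
  BddMeasC.finset_sum _ fun m _ => (hf.iterate_PC hφ hφb m).const_mul _

lemma PC_PCgeomSum (hφ : Measurable φ) (hφb : BddAbove (Set.range φ)) {f : X → ℂ}
    (hf : BddMeasC f) (n : ℕ) (a : ℂ) :
    PC φ κ (PCgeomSum φ κ n a f) =
      fun x => ∑ m ∈ Finset.range n, a ^ m * (PC φ κ)^[m + 1] f x := by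
  unfold PCgeomSum
  rw [PC_finset_sum _ fun m _ => (hf.iterate_PC hφ hφb m).const_mul _]
  funext x
  simp only [PC_const_mul, Function.iterate_succ_apply']

lemma mul_PC_PCgeomSum_ae (hφ : Measurable φ) (hφb : BddAbove (Set.range φ)) {μ : Measure X}
    {f : X → ℂ} (hf : BddMeasC f) {n : ℕ} {a : ℂ}
    (hfe : ∀ᵐ x ∂μ, a ^ n * (PC φ κ)^[n] f x = f x) :
    ∀ᵐ x ∂μ, a * PC φ κ (PCgeomSum φ κ n a f) x = PCgeomSum φ κ n a f x := by
  rw [PC_PCgeomSum hφ hφb hf]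
  filter_upwards [hfe] with x hx
  exact mul_sum_range_pow_mul_succ (u := fun m => (PC φ κ)^[m] f x) hx

lemma exists_PC_eigen_of_iterate_eigen (hφ : Measurable φ) (hφb : BddAbove (Set.range φ))
    {μ : Measure X} {n : ℕ} (hn : n ≠ 0) {c : ℂ} (hc : c ≠ 0)
    {f : X → ℂ} (hf : BddMeasC f) (hf0 : ¬ f =ᵐ[μ] 0)
    (hfe : (PC φ κ)^[n] f =ᵐ[μ] fun x => c * f x) :
    ∃ γ : ℂ, γ ^ n = c ∧ ∃ F : X → ℂ, BddMeasC F ∧ ¬ F =ᵐ[μ] 0 ∧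
      PC φ κ F =ᵐ[μ] fun x => γ * F x := by
  obtain ⟨b, hb⟩ := IsAlgClosed.exists_pow_nat_eq c⁻¹ (Nat.pos_of_ne_zero hn)
  have hξ := Complex.isPrimitiveRoot_exp n hn
  set ξ := Complex.exp (2 * Real.pi * Complex.I / n)
  have hcoef : ∀ j : ℕ, (b * ξ ^ j) ^ n = c⁻¹ := fun j => by
    rw [mul_pow, ← pow_mul, mul_comm j n, pow_mul, hξ.pow_eq_one, one_pow, mul_one, hb]
  obtain ⟨j, hj⟩ : ∃ j : ℕ, ¬ PCgeomSum φ κ n (b * ξ ^ j) f =ᵐ[μ] 0 := by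
    by_contra! hzero
    refine hf0 ((ae_all_iff.2 hzero).mono fun x hx => ?_)
    have hsum := sum_range_PCgeomSum (φ := φ) (κ := κ) hξ hn b f x
    simp only [hx, Pi.zero_apply, Finset.sum_const_zero] at hsum
    exact (mul_eq_zero.1 hsum.symm).resolve_left (Nat.cast_ne_zero.2 hn)
  have ha : b * ξ ^ j ≠ 0 := fun h => inv_ne_zero hc (by rw [← hcoef j, h, zero_pow hn])
  refine ⟨(b * ξ ^ j)⁻¹, by rw [inv_pow, hcoef, inv_inv], _, hf.PCgeomSum hφ hφb n _, hj, ?_⟩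
  have hfe' : ∀ᵐ x ∂μ, (b * ξ ^ j) ^ n * (PC φ κ)^[n] f x = f x :=
    hfe.mono fun x hx => by rw [hx, hcoef, inv_mul_cancel_left₀ hc]
  filter_upwards [mul_PC_PCgeomSum_ae hφ hφb hf hfe'] with x hx
  rw [← hx, inv_mul_cancel_left₀ ha]

end Koopman

theorem statement14_general (μ : Measure M) (κ : Kernel M M) (φ : M → ℝ)
    (T : Lp ℂ ⊤ μ →L[ℂ] Lp ℂ ⊤ μ) (lam : ℝ) (g : M → ℝ)
    (hHA : HypHA μ κ φ T lam g)
    (k : ℕ) (hk : PerSpecEq μ κ φ lam k) :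
    ∀ α : ℂ, ‖α‖ = 1 →
      ((∃ f : M → ℂ, BddMeasC f ∧ ¬ (f =ᵐ[μ] 0) ∧
          (PC φ κ)^[k + 1] f =ᵐ[μ] fun x => (lam : ℂ) ^ (k + 1) * α * f x) ↔
        (∃ f : M → ℂ, BddMeasC f ∧ ¬ (f =ᵐ[μ] 0) ∧
          PC φ κ f =ᵐ[μ] fun x => (lam : ℂ) * α * f x)) := by
  have : IsFiniteKernel κ := isFiniteKernel_of_le_one hHA.setup.subMarkov
  have hφ := hHA.setup.contφ
  have hlam : (lam : ℂ) ≠ 0 := Complex.ofReal_ne_zero.2 hHA.lam_pos.ne'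
  intro α hα
  constructor
  · rintro ⟨f, hf, hf0, hfe⟩
    have hc : (lam : ℂ) ^ (k + 1) * α ≠ 0 :=
      mul_ne_zero (pow_ne_zero _ hlam) (norm_ne_zero_iff.1 (hα ▸ one_ne_zero))
    obtain ⟨γ, hγ, F, hF, hF0, hFe⟩ := exists_PC_eigen_of_iterate_eigen hφ.measurable
      (isCompact_range hφ).bddAbove k.succ_ne_zero hc hf hf0 hfe
    have hγnorm := norm_eq_of_pow_eq_pow_mul hHA.lam_pos.le k.succ_ne_zero hα hγ
    obtain ⟨ω, hω, rfl⟩ := hk.eq_mul_of_perSpec ⟨hγnorm, F, hF, hF0, hFe⟩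
    rw [mul_pow, pow_succ ω, hω, one_mul] at hγ
    obtain rfl := mul_left_cancel₀ (pow_ne_zero _ hlam) hγ
    exact ⟨F, hF, hF0, hFe⟩
  · rintro ⟨f, hf, hf0, hfe⟩
    have hnorm : ‖(lam : ℂ) * α‖ = lam := by
      rw [norm_mul, hα, mul_one, Complex.norm_real, Real.norm_of_nonneg hHA.lam_pos.le]
    obtain ⟨ω, hω, hαω⟩ := hk.eq_mul_of_perSpec ⟨hnorm, f, hf, hf0, hfe⟩
    obtain rfl := mul_left_cancel₀ hlam hαω
    refine ⟨f, hf, hf0, ?_⟩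
    filter_upwards [PC_iterate_ae_eq_pow_mul hHA.setup.ac hfe (k + 1)] with x hx
    rw [hx, mul_pow, pow_succ α, hω, one_mul]

/-- **Step 1 of Lemma A.3.** Under Hypothesis (HA) with
`σ_per(P) = {lam e^{2πi j/k}}_{j<k}`: for every unimodular `α`, the operator `P^{k+1}` has a
nonzero eigenfunction in `L^∞(M,μ;ℂ)` for the eigenvalue `lam^{k+1} α` iff `P` has one for
`lam α`. -/
theorem statement14 (μ : Measure M) (κ : Kernel M M) (φ : M → ℝ)
    (T : Lp ℂ ⊤ μ →L[ℂ] Lp ℂ ⊤ μ) (lam : ℝ) (g : M → ℝ)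
    (hHA : HypHA μ κ φ T lam g)
    (k : ℕ) (hk1 : 1 ≤ k) (hk : PerSpecEq μ κ φ lam k) :
    ∀ α : ℂ, ‖α‖ = 1 →
      ((∃ f : M → ℂ, BddMeasC f ∧ ¬ (f =ᵐ[μ] 0) ∧
          (PC φ κ)^[k + 1] f =ᵐ[μ] fun x => (lam : ℂ) ^ (k + 1) * α * f x) ↔
        (∃ f : M → ℂ, BddMeasC f ∧ ¬ (f =ᵐ[μ] 0) ∧
          PC φ κ f =ᵐ[μ] fun x => (lam : ℂ) * α * f x)) :=
  statement14_general μ κ φ T lam g hHA k hk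

end

end QEM
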